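/- Let D = {(x_i, y_i)} be a δ-separated dataset in ℝ^d and σ < δ/2. If D is not (σ, k)-preservable, then for every matrix M ∈ ℝ^{d×d} of rank k there exist indices i, j with y_i ≠ y_j and points a_i ∈ B₂^d(x_i, σ), a_j ∈ B₂^d(x_j, σ) such that M(a_i − a_j) = 0. -/

import Mathlib

open scoped ENNReal BigOperators

noncomputable section

/-- A multilayer perceptron (feedforward ReLU network) with input dimension `m`
and output dimension `n`, given as a nonempty list of affine layers. -/
inductive MLP : ℕ → ℕ → Type
  | last : {m n : ℕ} → Matrix (Fin n) (Fin m) ℝ → (Fin n → ℝ) → MLP m n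
  | cons : {m h n : ℕ} → Matrix (Fin h) (Fin m) ℝ → (Fin h → ℝ) → MLP h n → MLP m n

/-- Evaluation of an MLP: every affine layer except the last is followed by a
coordinatewise ReLU. -/
def MLP.eval : {m n : ℕ} → MLP m n → (Fin m → ℝ) → Fin n → ℝ
  | _, _, .last W b, x => W.mulVec x + b
  | _, _, .cons W b rest, x => MLP.eval rest fun i => max ((W.mulVec x + b) i) 0

/-- Depth of an MLP: the number of affine layers. -/
def MLP.depth : {m n : ℕ} → MLP m n → ℕ
  | _, _, .last _ _ => 1
  | _, _, .cons _ _ rest => MLP.depth rest + 1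

/-- Width of an MLP: the maximum of the hidden-layer dimensions. -/
def MLP.width : {m n : ℕ} → MLP m n → ℕ
  | _, _, .last _ _ => 0
  | _, _, @MLP.cons _ h _ _ _ rest => max h (MLP.width rest)

/-- The `l_p` (quasi-)norm on `ℝ^d`, for `p ∈ (0,∞]`. -/
def lpNorm (p : ℝ≥0∞) {d : ℕ} (x : Fin d → ℝ) : ℝ :=
  if p = ⊤ then ⨆ i, |x i| else (∑ i, |x i| ^ p.toReal) ^ (1 / p.toReal)

/-- The `l_p` norm on `ℝ^d` with a real exponent `p`. -/
def lpNormR (p : ℝ) {d : ℕ} (x : Fin d → ℝ) : ℝ := (∑ i, |x i| ^ p) ^ (1 / p)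

/-- `1/p`, with the convention `1/∞ = 0`. -/
def rinv (p : ℝ≥0∞) : ℝ := if p = ⊤ then 0 else 1 / p.toReal

/-- `c_p^+(d) = d^{[1/2 - 1/p]_+}`. -/
def cplus (p : ℝ≥0∞) (d : ℕ) : ℝ := (d : ℝ) ^ max ((1 : ℝ) / 2 - rinv p) 0

/-- `c_p^-(d) = d^{[1/2 - 1/p]_-}`. -/
def cminus (p : ℝ≥0∞) (d : ℕ) : ℝ := (d : ℝ) ^ min ((1 : ℝ) / 2 - rinv p) 0

/-- A dataset is `(δ, q)`-separated if the minimal `l_q` distance between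
differently labeled points equals `δ`. -/
def Separated {N d : ℕ} (q : ℝ≥0∞) (δ : ℝ) (X : Fin N → Fin d → ℝ) (Y : Fin N → ℕ) : Prop :=
  (∀ i j, Y i ≠ Y j → δ ≤ lpNorm q (X i - X j)) ∧
    ∃ i j, Y i ≠ Y j ∧ lpNorm q (X i - X j) = δ

/-- `f` `(σ, p)`-robustly memorizes the dataset `(X, Y)`. -/
def RobustMem {N d : ℕ} (p : ℝ≥0∞) (σ : ℝ) (X : Fin N → Fin d → ℝ) (Y : Fin N → ℕ)
    (f : (Fin d → ℝ) → ℝ) : Prop :=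
  ∀ i, ∀ x : Fin d → ℝ, lpNorm p (x - X i) ≤ σ → f x = (Y i : ℝ)

/-- A matrix `M` `(σ, k)`-preserves a dataset: Euclidean distances between points of
`σ`-neighborhoods (in `l₂`) of differently labeled data points do not decrease. -/
def Preserves {N d m : ℕ} (σ : ℝ) (X : Fin N → Fin d → ℝ) (Y : Fin N → ℕ)
    (M : Matrix (Fin m) (Fin d) ℝ) : Prop :=
  ∀ i j, Y i ≠ Y j → ∀ a a' : Fin d → ℝ,
    lpNorm 2 (a - X i) ≤ σ → lpNorm 2 (a' - X j) ≤ σ →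
      lpNorm 2 (a - a') ≤ lpNorm 2 (M.mulVec a - M.mulVec a')

/-- The `l₂ → l₂` (spectral) operator norm of a matrix. -/
def matOpNorm {m d : ℕ} (M : Matrix (Fin m) (Fin d) ℝ) : ℝ :=
  sSup {c | ∃ x : Fin d → ℝ, lpNorm 2 x ≤ 1 ∧ c = lpNorm 2 (M.mulVec x)}

/-- Generalized binomial coefficient `C(s, m) = s(s-1)⋯(s-m+1)/m!`. -/
def gchoose (s : ℝ) (m : ℕ) : ℝ := (∏ i ∈ Finset.range m, (s - (i : ℝ))) / (m.factorial : ℝ)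

lemma lpNorm_two_eq {d : ℕ} (x : Fin d → ℝ) :
    lpNorm 2 x = Real.sqrt (∑ i, (x i)^2) := by
  rw [lpNorm, if_neg (by norm_num : (2:ℝ≥0∞) ≠ ⊤)]
  have h2 : (2:ℝ≥0∞).toReal = 2 := by norm_num
  rw [h2, Real.sqrt_eq_rpow]
  congr 1
  refine Finset.sum_congr rfl fun i _ => ?_
  rw [Real.rpow_two, sq_abs]

lemma lpNorm_two_nonneg {d : ℕ} (x : Fin d → ℝ) : 0 ≤ lpNorm 2 x := by
  rw [lpNorm_two_eq]; exact Real.sqrt_nonneg _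

lemma lpNorm_two_eq_zero {d : ℕ} (x : Fin d → ℝ) (h : lpNorm 2 x = 0) : x = 0 := by
  rw [lpNorm_two_eq] at h
  have hs : (∑ i, (x i)^2) = 0 :=
    le_antisymm (Real.sqrt_eq_zero'.mp h) (Finset.sum_nonneg fun i _ => sq_nonneg _)
  funext i
  have := (Finset.sum_eq_zero_iff_of_nonneg (fun i _ => sq_nonneg (x i))).mp hs i (Finset.mem_univ i)
  simpa using pow_eq_zero_iff (n := 2) (by norm_num) |>.mp this

lemma lpNorm_two_smul {d : ℕ} (c : ℝ) (x : Fin d → ℝ) :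
    lpNorm 2 (c • x) = |c| * lpNorm 2 x := by
  rw [lpNorm_two_eq, lpNorm_two_eq]
  have : ∑ i, (c • x) i ^ 2 = c^2 * ∑ i, (x i)^2 := by
    simp [Finset.mul_sum, mul_pow]
  rw [this, Real.sqrt_mul (sq_nonneg c), Real.sqrt_sq_eq_abs]

lemma lpNorm_two_continuous {d : ℕ} : Continuous fun x : Fin d → ℝ => lpNorm 2 x := by
  simp only [lpNorm_two_eq]
  exact Real.continuous_sqrt.comp (continuous_finset_sum _ fun i _ => (continuous_apply i).pow 2)

lemma coord_le_lpNorm_two {d : ℕ} (x : Fin d → ℝ) (j : Fin d) : |x j| ≤ lpNorm 2 x := by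
  rw [lpNorm_two_eq, ← Real.sqrt_sq_eq_abs]
  exact Real.sqrt_le_sqrt (Finset.single_le_sum (fun i _ => sq_nonneg (x i)) (Finset.mem_univ j))

lemma rank_smul_ne_zero {d : ℕ} (c : ℝ) (hc : c ≠ 0) (M : Matrix (Fin d) (Fin d) ℝ) :
    (c • M).rank = M.rank := by
  have hlin : (c • M).mulVecLin = c • M.mulVecLin := by
    ext v
    simp [Matrix.mulVecLin_apply, Matrix.smul_mulVec]
  have hr : LinearMap.range (c • M).mulVecLin = LinearMap.range M.mulVecLin := by
    rw [hlin, LinearMap.range_smul _ _ hc]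
  unfold Matrix.rank
  rw [hr]

/-- **Consequence of non-preservability**: every rank-`k` matrix collapses a pair of
points from neighborhoods of differently labeled data points. -/
theorem nonpreservable_collapses
    (N d C k : ℕ) (σ δ : ℝ)
    (X : Fin N → Fin d → ℝ) (Y : Fin N → ℕ)
    (hY : ∀ i, 1 ≤ Y i ∧ Y i ≤ C) (hsep : Separated 2 δ X Y) (hσδ : σ < δ / 2)
    (hnotpres : ¬ ∃ M : Matrix (Fin d) (Fin d) ℝ, M.rank = k ∧ Preserves σ X Y M) :
    ∀ M : Matrix (Fin d) (Fin d) ℝ, M.rank = k →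
      ∃ i j, Y i ≠ Y j ∧ ∃ a a' : Fin d → ℝ,
        lpNorm 2 (a - X i) ≤ σ ∧ lpNorm 2 (a' - X j) ≤ σ ∧ M.mulVec (a - a') = 0 := by
  intro M hMk
  by_contra hcon
  push_neg at hcon
  -- σ < 0 case: Preserves holds vacuously
  rcases lt_or_ge σ 0 with hσ | hσ
  · exact hnotpres ⟨M, hMk, fun i j hij a a' ha _ =>
      absurd (le_trans (lpNorm_two_nonneg _) ha) (not_le.mpr hσ)⟩
  -- main case
  classical
  set A := (Fin N × Fin N) × ((Fin d → ℝ) × (Fin d → ℝ))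
  set Cb : Fin N → Set (Fin d → ℝ) := fun i => {a | lpNorm 2 (a - X i) ≤ σ} with hCb
  have hCbcont : ∀ i, Continuous (fun a : Fin d → ℝ => lpNorm 2 (a - X i)) := fun i =>
    lpNorm_two_continuous.comp (continuous_id.sub continuous_const)
  have hCbclosed : ∀ i, IsClosed (Cb i) := fun i => isClosed_le (hCbcont i) continuous_const
  have hCbcomp : ∀ i, IsCompact (Cb i) := by
    intro i
    refine (isCompact_closedBall (X i) σ).of_isClosed_subset (hCbclosed i) ?_
    intro a ha
    rw [Metric.mem_closedBall, dist_eq_norm]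
    rw [pi_norm_le_iff_of_nonneg hσ]
    intro j
    exact le_trans (coord_le_lpNorm_two (a - X i) j) ha
  set P : Finset (Fin N × Fin N) := Finset.univ.filter (fun p => Y p.1 ≠ Y p.2) with hP
  set S : Set A := ⋃ p ∈ P, ({p} : Set (Fin N × Fin N)) ×ˢ (Cb p.1 ×ˢ Cb p.2) with hS
  have hmemS : ∀ q : A, q ∈ S ↔ Y q.1.1 ≠ Y q.1.2 ∧ q.2.1 ∈ Cb q.1.1 ∧ q.2.2 ∈ Cb q.1.2 := by
    intro q
    simp only [hS, Set.mem_iUnion, Set.mem_prod, Set.mem_singleton_iff, hP, Finset.mem_filter,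
      Finset.mem_univ, true_and]
    constructor
    · rintro ⟨p, hp, rfl, h1, h2⟩
      exact ⟨hp, h1, h2⟩
    · rintro ⟨hq, h1, h2⟩
      exact ⟨q.1, hq, rfl, h1, h2⟩
  have hScomp : IsCompact S :=
    P.isCompact_biUnion fun p _ =>
      isCompact_singleton.prod ((hCbcomp p.1).prod (hCbcomp p.2))
  have hSne : S.Nonempty := by
    obtain ⟨i, j, hij, -⟩ := hsep.2
    refine ⟨((i, j), (X i, X j)), (hmemS _).mpr ⟨hij, ?_, ?_⟩⟩ <;>
      · simp only [hCb, Set.mem_setOf_eq, sub_self, lpNorm_two_eq]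
        simpa using hσ
  set g : A → ℝ := fun q => lpNorm 2 (M.mulVec (q.2.1 - q.2.2)) with hg
  set h : A → ℝ := fun q => lpNorm 2 (q.2.1 - q.2.2) with hh
  have hgcont : Continuous g := by
    have hmv : Continuous fun v : Fin d → ℝ => M.mulVec v := by
      have := LinearMap.continuous_of_finiteDimensional (M.mulVecLin)
      exact this
    exact lpNorm_two_continuous.comp (hmv.comp ((continuous_fst.comp continuous_snd).sub
      (continuous_snd.comp continuous_snd)))
  have hhcont : Continuous h :=
    lpNorm_two_continuous.comp ((continuous_fst.comp continuous_snd).sub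
      (continuous_snd.comp continuous_snd))
  obtain ⟨q₀, hq₀S, hq₀min⟩ := hScomp.exists_isMinOn hSne hgcont.continuousOn
  obtain ⟨q₁, hq₁S, hq₁max⟩ := hScomp.exists_isMaxOn hSne hhcont.continuousOn
  set μ : ℝ := g q₀ with hμdef
  set R : ℝ := h q₁ with hRdef
  have hμpos : 0 < μ := by
    obtain ⟨hq0y, hq01, hq02⟩ := (hmemS q₀).mp hq₀S
    have hne : M.mulVec (q₀.2.1 - q₀.2.2) ≠ 0 := hcon q₀.1.1 q₀.1.2 hq0y q₀.2.1 q₀.2.2 hq01 hq02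
    exact lt_of_le_of_ne (lpNorm_two_nonneg _) fun heq =>
      hne (lpNorm_two_eq_zero _ heq.symm)
  set c : ℝ := R / μ + 1 with hcdef
  have hRpos : 0 ≤ R := le_trans (lpNorm_two_nonneg _) le_rfl
  have hcpos : 0 < c := by
    have : 0 ≤ R / μ := div_nonneg hRpos hμpos.le
    rw [hcdef]; linarith
  refine hnotpres ⟨c • M, ?_, ?_⟩
  · rw [rank_smul_ne_zero c hcpos.ne' M]; exact hMk
  · intro i j hij a a' ha ha'
    have hqS : ((i, j), (a, a')) ∈ S := (hmemS _).mpr ⟨hij, ha, ha'⟩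
    have hgq : μ ≤ g ((i, j), (a, a')) := hq₀min hqS
    have hhq : h ((i, j), (a, a')) ≤ R := hq₁max hqS
    have key : lpNorm 2 ((c • M).mulVec a - (c • M).mulVec a')
        = c * g ((i, j), (a, a')) := by
      rw [← Matrix.mulVec_sub, Matrix.smul_mulVec, lpNorm_two_smul,
        abs_of_pos hcpos]
    rw [key]
    have h1 : c * μ ≤ c * g ((i, j), (a, a')) :=
      mul_le_mul_of_nonneg_left hgq hcpos.le
    have h2 : c * μ = R + μ := by
      rw [hcdef]
      field_simp
    have hhq' : lpNorm 2 (a - a') ≤ R := hhq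
    linarith

end
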